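/- Let $\Omega \subsetneq \mathbb{R}^n$ be a domain, let $\gamma : [0, \ell] \to \Omega$ be a rectifiable curve parameterized by arc length from $x = \gamma(0)$ to $y = \gamma(\ell)$ which is an $M$-John curve in the sense that $M \, d(\gamma(t), \partial\Omega) \geq t$ for all $t \in [0, \ell]$ and $\ell \leq M \, d(y, \partial\Omega)$, with $M \geq 1$. Suppose $d(x, \partial\Omega) \leq d(y, \partial\Omega)$. Then the quasihyperbolic length of $\gamma$ satisfies $\int_0^{\ell} \frac{dt}{d(\gamma(t), \partial\Omega)} \leq 1 + M^2 + M\log 2 + M \log\left(\frac{d(y, \partial\Omega)}{d(x, \partial\Omega)}\right)$. -/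

import Mathlib

/-!
Write `f t` for the distance from `γ t` to the boundary; it is `1`-Lipschitz in `t`. On
`[0, f 0 / 2]` this gives `f ≥ f 0 / 2`, so that stretch contributes at most `1`. Beyond it the
John condition `t ≤ M f t` bounds the integrand by `M / t`, contributing at most
`M log (2ℓ / f 0) ≤ M log (2 M f ℓ / f 0)`, and `M log M ≤ M ^ 2`.
-/

open Real Metric Set intervalIntegral

theorem infDist_frontier_pos {X : Type*} [MetricSpace X] [PreconnectedSpace X] {Ω : Set X}
    (hΩ : IsOpen Ω) (hΩ' : Ω ≠ univ) {x : X} (hx : x ∈ Ω) : 0 < infDist x (frontier Ω) := by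
  refine (isClosed_frontier.notMem_iff_infDist_pos
    (nonempty_frontier_iff.mpr ⟨⟨x, hx⟩, hΩ'⟩)).mp fun hfr => ?_
  rw [hΩ.frontier_eq] at hfr
  exact hfr.2 hx

section QuasihyperbolicLength

variable {f : ℝ → ℝ} {M a b ℓ : ℝ}

theorem intervalIntegrable_one_div_of_pos (hf : Continuous f) (hpos : ∀ t ∈ uIcc a b, 0 < f t) :
    IntervalIntegrable (fun t => 1 / f t) MeasureTheory.volume a b :=
  (continuousOn_const.div hf.continuousOn fun t ht => (hpos t ht).ne').intervalIntegrable

theorem half_le_of_lipschitzWith_one (hf : LipschitzWith 1 f) {t : ℝ} (ht : t ∈ Icc 0 (f 0 / 2)) :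
    f 0 / 2 ≤ f t := by
  have := hf.le_add_mul 0 t
  rw [Real.dist_eq, zero_sub, abs_neg, abs_of_nonneg ht.1, NNReal.coe_one, one_mul] at this
  linarith [ht.2]

theorem integral_one_div_le_of_lipschitzWith_one (hf : LipschitzWith 1 f) (h0 : 0 < f 0)
    (hb : 0 ≤ b) (hb' : b ≤ f 0 / 2) :
    IntervalIntegrable (fun t => 1 / f t) MeasureTheory.volume 0 b ∧
      ∫ t in 0..b, 1 / f t ≤ 2 * b / f 0 := by
  have hhalf : ∀ t ∈ Icc 0 b, f 0 / 2 ≤ f t := fun t ht =>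
    half_le_of_lipschitzWith_one hf ⟨ht.1, ht.2.trans hb'⟩
  have hint := intervalIntegrable_one_div_of_pos hf.continuous fun t ht => by
    rw [uIcc_of_le hb] at ht
    linarith [hhalf t ht]
  refine ⟨hint, ?_⟩
  calc ∫ t in 0..b, 1 / f t ≤ ∫ _ in 0..b, 1 / (f 0 / 2) :=
        integral_mono_on hb hint intervalIntegrable_const fun t ht =>
          one_div_le_one_div_of_le (by positivity) (hhalf t ht)
    _ = 2 * b / f 0 := by rw [integral_const, smul_eq_mul]; field_simp; ring

theorem integral_one_div_le_mul_log_of_le_mul (hf : Continuous f) (hM : 0 < M) (ha : 0 < a)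
    (haℓ : a ≤ ℓ) (hJohn : ∀ t ∈ Icc a ℓ, t ≤ M * f t) :
    IntervalIntegrable (fun t => 1 / f t) MeasureTheory.volume a ℓ ∧
      ∫ t in a..ℓ, 1 / f t ≤ M * log (ℓ / a) := by
  have hpos : ∀ t ∈ Icc a ℓ, 0 < f t := fun t ht =>
    pos_of_mul_pos_right ((ha.trans_le ht.1).trans_le (hJohn t ht)) hM.le
  have hint := intervalIntegrable_one_div_of_pos hf fun t ht => hpos t (uIcc_of_le haℓ ▸ ht)
  have hinv : IntervalIntegrable (fun t => M * t⁻¹) MeasureTheory.volume a ℓ :=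
    (intervalIntegrable_inv (fun t ht => (ha.trans_le
      (uIcc_of_le haℓ ▸ ht).1).ne') continuousOn_id).const_mul M
  refine ⟨hint, ?_⟩
  calc ∫ t in a..ℓ, 1 / f t ≤ ∫ t in a..ℓ, M * t⁻¹ :=
        integral_mono_on haℓ hint hinv fun t ht => by
          rw [div_le_iff₀ (hpos t ht), mul_right_comm, ← div_eq_mul_inv,
            le_div_iff₀ (ha.trans_le ht.1), one_mul]
          exact hJohn t ht
    _ = M * log (ℓ / a) := by
      rw [integral_const_mul, integral_inv_of_pos ha (ha.trans_le haℓ)]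

theorem integral_one_div_le_of_lipschitzWith_one_of_john (hf : LipschitzWith 1 f)
    (h0 : 0 < f 0) (hM : 0 < M) (hℓ : 0 ≤ ℓ) (hJohn : ∀ t ∈ Icc 0 ℓ, t ≤ M * f t) :
    ∫ t in 0..ℓ, 1 / f t ≤ 1 + M ^ 2 + M * log 2 + M * log (f ℓ / f 0) := by
  rcases le_or_gt ℓ (f 0 / 2) with hshort | hlong
  · have hfℓ := half_le_of_lipschitzWith_one hf ⟨hℓ, hshort⟩
    have hfℓ_pos : 0 < f ℓ := by linarith
    have hlog : 0 ≤ log 2 + log (f ℓ / f 0) := by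
      rw [← log_mul two_ne_zero (by positivity), mul_div_assoc']
      exact log_nonneg (by rw [le_div_iff₀ h0]; linarith)
    have hint := (integral_one_div_le_of_lipschitzWith_one hf h0 hℓ hshort).2
    have h2ℓ : 2 * ℓ / f 0 ≤ 1 := by rw [div_le_one h0]; linarith
    nlinarith [mul_nonneg hM.le hlog]
  · set a := f 0 / 2 with ha_def
    have ha : 0 < a := by positivity
    obtain ⟨hint₁, hle₁⟩ := integral_one_div_le_of_lipschitzWith_one hf h0 ha.le le_rfl
    obtain ⟨hint₂, hle₂⟩ := integral_one_div_le_mul_log_of_le_mul hf.continuous hM ha hlong.le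
      fun t ht => hJohn t ⟨ha.le.trans ht.1, ht.2⟩
    have hfℓ : 0 < f ℓ := pos_of_mul_pos_right
      ((ha.trans hlong).trans_le (hJohn ℓ ⟨hℓ, le_rfl⟩)) hM.le
    have hratio : ℓ / a ≤ 2 * M * (f ℓ / f 0) := by
      rw [div_le_iff₀ ha]
      calc ℓ ≤ M * f ℓ := hJohn ℓ ⟨hℓ, le_rfl⟩
        _ = 2 * M * (f ℓ / f 0) * a := by rw [ha_def]; field_simp
    have hlog : log (ℓ / a) ≤ log 2 + log M + log (f ℓ / f 0) := by
      rw [← log_mul two_ne_zero hM.ne', ← log_mul (by positivity) (by positivity)]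
      exact log_le_log (div_pos (ha.trans hlong) ha) hratio
    have hlogM : log M ≤ M - 1 := log_le_sub_one_of_pos hM
    rw [← integral_add_adjacent_intervals hint₁ hint₂]
    have : 2 * a / f 0 = 1 := by rw [ha_def]; field_simp
    nlinarith [mul_le_mul_of_nonneg_left hlog hM.le]

end QuasihyperbolicLength

theorem stmt_7_general {n : ℕ} (Ω : Set (EuclideanSpace ℝ (Fin n)))
    (hΩo : IsOpen Ω) (hΩproper : Ω ≠ Set.univ)
    (M ℓ : ℝ) (hM : 1 ≤ M) (hℓ : 0 ≤ ℓ)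
    (γ : ℝ → EuclideanSpace ℝ (Fin n))
    (hγΩ : ∀ t ∈ Set.Icc (0 : ℝ) ℓ, γ t ∈ Ω)
    (harc : ∀ s t : ℝ, ‖γ s - γ t‖ ≤ |s - t|)
    (hJohn : ∀ t ∈ Set.Icc (0 : ℝ) ℓ, t ≤ M * infDist (γ t) (frontier Ω)) :
    ∫ t in (0:ℝ)..ℓ, 1 / infDist (γ t) (frontier Ω) ≤
      1 + M ^ 2 + M * Real.log 2 +
        M * Real.log (infDist (γ ℓ) (frontier Ω) / infDist (γ 0) (frontier Ω)) := by
  have hγ : LipschitzWith 1 γ := LipschitzWith.of_dist_le_mul fun s t => by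
    simpa [dist_eq_norm, Real.dist_eq] using harc s t
  have hd : LipschitzWith 1 fun t => infDist (γ t) (frontier Ω) := by
    simpa only [mul_one, Function.comp_def] using (lipschitz_infDist_pt (frontier Ω)).comp hγ
  exact integral_one_div_le_of_lipschitzWith_one_of_john hd
    (infDist_frontier_pos hΩo hΩproper (hγΩ 0 ⟨le_rfl, hℓ⟩)) (by linarith) hℓ hJohn

theorem stmt_7 {n : ℕ} (Ω : Set (EuclideanSpace ℝ (Fin n)))
    (hΩo : IsOpen Ω) (hΩne : Ω.Nonempty) (hΩproper : Ω ≠ Set.univ)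
    (M ℓ : ℝ) (hM : 1 ≤ M) (hℓ : 0 ≤ ℓ)
    (γ : ℝ → EuclideanSpace ℝ (Fin n))
    (hγΩ : ∀ t ∈ Set.Icc (0 : ℝ) ℓ, γ t ∈ Ω)
    (harc : ∀ s t : ℝ, ‖γ s - γ t‖ ≤ |s - t|)
    (hJohn : ∀ t ∈ Set.Icc (0 : ℝ) ℓ, t ≤ M * infDist (γ t) (frontier Ω))
    (hend : ℓ ≤ M * infDist (γ ℓ) (frontier Ω))
    (hord : infDist (γ 0) (frontier Ω) ≤ infDist (γ ℓ) (frontier Ω)) :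
    ∫ t in (0:ℝ)..ℓ, 1 / infDist (γ t) (frontier Ω) ≤
      1 + M ^ 2 + M * Real.log 2 +
        M * Real.log (infDist (γ ℓ) (frontier Ω) / infDist (γ 0) (frontier Ω)) :=
  stmt_7_general Ω hΩo hΩproper M ℓ hM hℓ γ hγΩ harc hJohn
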